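/- Any closed polygonal curve in the plane that has the reachable subgraph G_r in its interior and the unreachable subgraph G_u in its exterior crosses each boundary edge (an edge with exactly one reachable endpoint) an odd number of times, and crosses each accessible edge (an edge with both endpoints reachable but which is itself not part of G_r) an even number of times, provided the curve avoids all vertices and crossings are transversal. -/

import Mathlib

open Set

noncomputable section

abbrev Pt : Type := EuclideanSpace ℝ (Fin 2)

def pathSet (l : List Pt) : Set Pt :=
  ⋃ pq ∈ l.zip l.tail, segment ℝ pq.1 pq.2

def IsClosedPoly (l : List Pt) : Prop := 2 ≤ l.length ∧ l.head? = l.getLast?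

/-- The interior region of a closed curve `C`: points off the curve whose complementary
component is bounded. -/
def curveInterior (C : Set Pt) : Set Pt :=
  {p : Pt | p ∉ C ∧ Bornology.IsBounded (connectedComponentIn Cᶜ p)}

/-- The exterior region of a closed curve `C`. -/
def curveExterior (C : Set Pt) : Set Pt :=
  {p : Pt | p ∉ C ∧ ¬ Bornology.IsBounded (connectedComponentIn Cᶜ p)}

/-! Walking along an edge from one endpoint to the other, the side of the curve (inside or
outside) can only change at a crossing, and by transversality it does change at each crossing.
So the number of crossings is even exactly when both endpoints lie on the same side, and the
hypotheses put the endpoints on the same side precisely when they have the same reachability. -/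

theorem connectedComponentIn_eq_of_mapsTo_Icc {X : Type*} [TopologicalSpace X] {U : Set X}
    {f : ℝ → X} {u v : ℝ} (hf : ContinuousOn f (Icc u v)) (huv : u ≤ v)
    (hU : MapsTo f (Icc u v) U) :
    connectedComponentIn U (f u) = connectedComponentIn U (f v) :=
  connectedComponentIn_eq <|
    (isPreconnected_Icc.image f hf).subset_connectedComponentIn
      (mem_image_of_mem f (left_mem_Icc.2 huv)) hU.image_subset
      (mem_image_of_mem f (right_mem_Icc.2 huv))

section Switching

variable {T : Set ℝ} {s : ℝ → Prop}

theorem exists_switch_after_min_crossing {a b m : ℝ} (ha : a ∉ T)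
    (hconst : ∀ u v, u ≤ v → Disjoint (Icc u v) T → (s u ↔ s v))
    (hfin : (Ioo a b ∩ T).Finite) (hm : m ∈ Ioo a b ∩ T)
    (hmin : ∀ t ∈ Ioo a b ∩ T, m ≤ t)
    (hswitch : ∀ ε > 0, (∃ p ∈ Metric.ball m ε, p ∉ T ∧ s p) ∧
      (∃ q ∈ Metric.ball m ε, q ∉ T ∧ ¬ s q)) :
    ∃ c ∈ Ioo m b, c ∉ T ∧ (s c ↔ ¬ s a) ∧ Ioo c b ∩ T = (Ioo a b ∩ T) \ {m} := by
  obtain ⟨ε, hε, hball⟩ := Metric.isOpen_iff.1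
    (isOpen_Ioo.inter (hfin.sdiff (t := {m})).isClosed.isOpen_compl) m
    ⟨hm.1, fun h => h.2 rfl⟩
  have hball_T : ∀ r ∈ Metric.ball m ε, r ∈ T → r = m := fun r hr hrT => by
    by_contra hne
    exact (hball hr).2 ⟨⟨(hball hr).1, hrT⟩, hne⟩
  have hleft : ∀ r ∈ Metric.ball m ε, r < m → (s r ↔ s a) := fun r hr hrm =>
    (hconst a r (hball hr).1.1.le <| disjoint_left.2 fun t ⟨hat, htr⟩ htT => by
      rcases hat.eq_or_lt with rfl | hat
      · exact ha htT
      · exact absurd (hmin t ⟨⟨hat, by linarith [(hball hr).1.2]⟩, htT⟩) (by linarith)).symm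
  have hright : ∀ r ∈ Metric.ball m ε, r ∉ T → (s r ↔ ¬ s a) → m < r := fun r hr hrT hsr => by
    rcases lt_trichotomy r m with h | rfl | h
    · have := hleft r hr h; tauto
    · exact absurd hm.2 hrT
    · exact h
  obtain ⟨c, hc, hcT, hsc⟩ : ∃ c ∈ Metric.ball m ε, c ∉ T ∧ (s c ↔ ¬ s a) := by
    obtain ⟨⟨p, hp, hpT, hsp⟩, ⟨q, hq, hqT, hsq⟩⟩ := hswitch ε hε
    by_cases hsa : s a
    · exact ⟨q, hq, hqT, by tauto⟩
    · exact ⟨p, hp, hpT, by tauto⟩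
  have hmc := hright c hc hcT hsc
  refine ⟨c, ⟨hmc, (hball hc).1.2⟩, hcT, hsc, ?_⟩
  ext t
  constructor
  · rintro ⟨⟨hct, htb⟩, htT⟩
    exact ⟨⟨⟨hm.1.1.trans (hmc.trans hct), htb⟩, htT⟩, (hmc.trans hct).ne'⟩
  · rintro ⟨htF, htm : t ≠ m⟩
    refine ⟨⟨not_le.1 fun htc => htm (hball_T t ?_ htF.2), htF.1.2⟩, htF.2⟩
    have hmt := (hmin t htF).lt_of_ne' htm
    rw [Metric.mem_ball, Real.dist_eq] at hc ⊢
    rw [abs_of_pos (sub_pos.2 hmt)]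
    linarith [le_abs_self (c - m)]

theorem even_ncard_Ioo_inter_iff {a b : ℝ} (ha : a ∉ T) (hb : b ∉ T) (hab : a ≤ b)
    (hconst : ∀ u v, u ≤ v → Disjoint (Icc u v) T → (s u ↔ s v))
    (hfin : (Ioo a b ∩ T).Finite)
    (hswitch : ∀ t ∈ Ioo a b ∩ T, ∀ ε > 0, (∃ p ∈ Metric.ball t ε, p ∉ T ∧ s p) ∧
      (∃ q ∈ Metric.ball t ε, q ∉ T ∧ ¬ s q)) :
    Even (Ioo a b ∩ T).ncard ↔ (s a ↔ s b) := by
  obtain ⟨n, hn⟩ : ∃ n, (Ioo a b ∩ T).ncard = n := ⟨_, rfl⟩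
  rw [hn]
  induction n generalizing a with
  | zero =>
    have hempty : Ioo a b ∩ T = ∅ := (ncard_eq_zero hfin).1 hn
    refine iff_of_true Even.zero (hconst a b hab <| disjoint_left.2 fun t ht htT => ?_)
    rcases ht.1.eq_or_lt with rfl | hat
    · exact ha htT
    rcases ht.2.eq_or_lt with rfl | htb
    · exact hb htT
    exact hempty.subset ⟨⟨hat, htb⟩, htT⟩
  | succ n ih =>
    obtain ⟨m, hm, hmin⟩ := exists_min_image (Ioo a b ∩ T) id hfin
      (nonempty_of_ncard_ne_zero (by omega))
    obtain ⟨c, hc, hcT, hsc, hcb⟩ :=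
      exists_switch_after_min_crossing ha hconst hfin hm hmin (hswitch m hm)
    have hcard : (Ioo c b ∩ T).ncard = n := by
      rw [hcb, ncard_sdiff_singleton_of_mem hm, hn, Nat.add_sub_cancel]
    have hsub : Ioo c b ∩ T ⊆ Ioo a b ∩ T := hcb ▸ sdiff_subset
    have := ih hcT hc.2.le (hfin.subset hsub) (fun t ht => hswitch t (hsub ht)) hcard
    rw [Nat.even_add_one, this]
    tauto

end Switching

theorem exists_mem_ball_lineMap_eq_of_mem_openSegment_inter_ball {E : Type*}
    [NormedAddCommGroup E] [NormedSpace ℝ E] {x y q : E} {t ε : ℝ}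
    (hq : q ∈ openSegment ℝ x y ∩ Metric.ball (AffineMap.lineMap x y t) (ε * dist x y)) :
    ∃ r ∈ Metric.ball t ε, AffineMap.lineMap x y r = q := by
  obtain ⟨⟨r, -, rfl⟩, hrt⟩ := openSegment_eq_image_lineMap ℝ x y ▸ hq
  rw [Metric.mem_ball, dist_lineMap_lineMap] at hrt
  exact ⟨r, lt_of_mul_lt_mul_right hrt dist_nonneg, rfl⟩

theorem even_ncard_inter_openSegment_iff {C : Set Pt} {x y : Pt} (hx : x ∉ C) (hy : y ∉ C)
    (hfin : (C ∩ openSegment ℝ x y).Finite)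
    (htrans : ∀ p ∈ C ∩ openSegment ℝ x y, ∀ ε > (0:ℝ),
      (∃ q ∈ openSegment ℝ x y ∩ Metric.ball p ε, q ∈ curveInterior C) ∧
      (∃ q ∈ openSegment ℝ x y ∩ Metric.ball p ε, q ∈ curveExterior C)) :
    Even (C ∩ openSegment ℝ x y).ncard ↔ (x ∈ curveInterior C ↔ y ∈ curveInterior C) := by
  rcases eq_or_ne x y with rfl | hxy
  · simp [openSegment_same, hx]
  set f : ℝ →ᵃ[ℝ] Pt := AffineMap.lineMap x y
  have hinj : Function.Injective f := AffineMap.lineMap_injective ℝ hxy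
  have hcrossings : C ∩ openSegment ℝ x y = f '' (Ioo 0 1 ∩ f ⁻¹' C) := by
    rw [image_inter_preimage, inter_comm, openSegment_eq_image_lineMap]
  have hconst : ∀ u v, u ≤ v → Disjoint (Icc u v) (f ⁻¹' C) →
      (f u ∈ curveInterior C ↔ f v ∈ curveInterior C) := fun u v huv hdisj => by
    have hoff : MapsTo f (Icc u v) Cᶜ := fun t ht => disjoint_left.1 hdisj ht
    simp only [curveInterior, mem_ofPred_eq, connectedComponentIn_eq_of_mapsTo_Icc (f := ⇑f)
      AffineMap.lineMap_continuous.continuousOn huv hoff]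
    exact and_congr_left fun _ =>
      iff_of_true (hoff (left_mem_Icc.2 huv)) (hoff (right_mem_Icc.2 huv))
  have hswitch : ∀ t ∈ Ioo 0 1 ∩ f ⁻¹' C, ∀ ε > 0,
      (∃ p ∈ Metric.ball t ε, p ∉ f ⁻¹' C ∧ f p ∈ curveInterior C) ∧
      (∃ q ∈ Metric.ball t ε, q ∉ f ⁻¹' C ∧ f q ∉ curveInterior C) := by
    rintro t ⟨ht, htC⟩ ε hε
    obtain ⟨⟨p, hp, hpin⟩, ⟨q, hq, hqout⟩⟩ :=
      htrans (f t) ⟨htC, openSegment_eq_image_lineMap ℝ x y ▸ mem_image_of_mem f ht⟩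
        (ε * dist x y) (mul_pos hε (dist_pos.2 hxy))
    obtain ⟨p, hpt, rfl⟩ := exists_mem_ball_lineMap_eq_of_mem_openSegment_inter_ball hp
    obtain ⟨q, hqt, rfl⟩ := exists_mem_ball_lineMap_eq_of_mem_openSegment_inter_ball hq
    exact ⟨⟨p, hpt, hpin.1, hpin⟩, ⟨q, hqt, hqout.1, fun hin => hqout.2 hin.2⟩⟩
  have h := even_ncard_Ioo_inter_iff (T := f ⁻¹' C) (s := fun t => f t ∈ curveInterior C)
    (by simpa [f] using hx) (by simpa [f] using hy) zero_le_one hconst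
    ((hcrossings ▸ hfin).of_finite_image hinj.injOn) hswitch
  rw [hcrossings, ncard_image_of_injective _ hinj]
  rwa [show f 0 = x from AffineMap.lineMap_apply_zero x y,
    show f 1 = y from AffineMap.lineMap_apply_one x y] at h

theorem stmt_6_general {V : Type*} (pos : V → Pt) (E : Set (V × V))
    (reach : V → Prop)
    (Er : Set (V × V))  -- the passable edges (reachable subgraph)
    (S : List Pt)
    -- the curve avoids all vertices
    (havoid : ∀ v : V, pos v ∉ pathSet S)
    -- the interior contains the reachable subgraph
    (hinV : ∀ v : V, reach v → pos v ∈ curveInterior (pathSet S))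
    -- the exterior contains the unreachable subgraph
    (houtV : ∀ v : V, ¬ reach v → pos v ∈ curveExterior (pathSet S))
    -- crossings are transversal: near each crossing point the edge has points on both sides
    (htrans : ∀ e ∈ E, ∀ p ∈ pathSet S ∩ openSegment ℝ (pos e.1) (pos e.2), ∀ ε > (0:ℝ),
      (∃ q ∈ openSegment ℝ (pos e.1) (pos e.2) ∩ Metric.ball p ε,
        q ∈ curveInterior (pathSet S)) ∧
      (∃ q ∈ openSegment ℝ (pos e.1) (pos e.2) ∩ Metric.ball p ε,
        q ∈ curveExterior (pathSet S)))
    -- finitely many crossings on each edge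
    (hfin : ∀ e ∈ E, (pathSet S ∩ openSegment ℝ (pos e.1) (pos e.2)).Finite) :
    (∀ e ∈ E, (reach e.1 ↔ ¬ reach e.2) →
      Odd (pathSet S ∩ openSegment ℝ (pos e.1) (pos e.2)).ncard) ∧
    (∀ e ∈ E, reach e.1 → reach e.2 → e ∉ Er →
      Even (pathSet S ∩ openSegment ℝ (pos e.1) (pos e.2)).ncard) := by
  have hinterior : ∀ v, pos v ∈ curveInterior (pathSet S) ↔ reach v := fun v =>
    ⟨fun hin => by_contra fun h => (houtV v h).2 hin.2, hinV v⟩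
  have hparity : ∀ e ∈ E, Even (pathSet S ∩ openSegment ℝ (pos e.1) (pos e.2)).ncard ↔
      (reach e.1 ↔ reach e.2) := fun e he => by
    rw [even_ncard_inter_openSegment_iff (havoid _) (havoid _) (hfin e he) (htrans e he),
      hinterior, hinterior]
  refine ⟨fun e he hboundary => ?_, fun e he h₁ h₂ _ => (hparity e he).2 (iff_of_true h₁ h₂)⟩
  rw [← Nat.not_even_iff_odd, hparity e he]
  tauto

/-- a closed polygonal curve `S` with the reachable subgraph in its interior
and the unreachable subgraph in its exterior, avoiding all vertices and crossing edges
transversally, crosses each boundary edge (exactly one reachable endpoint) an odd number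
of times, and each accessible edge (both endpoints reachable but the edge not in the
reachable subgraph) an even number of times. -/
theorem stmt_6 {V : Type*} (pos : V → Pt) (E : Set (V × V))
    (reach : V → Prop)
    (Er : Set (V × V)) (hEr : Er ⊆ E)  -- the passable edges (reachable subgraph)
    (hErreach : ∀ e ∈ Er, reach e.1 ∧ reach e.2)
    (S : List Pt) (hS : IsClosedPoly S)
    -- the curve avoids all vertices
    (havoid : ∀ v : V, pos v ∉ pathSet S)
    -- the interior contains the reachable subgraph
    (hinV : ∀ v : V, reach v → pos v ∈ curveInterior (pathSet S))
    (hinE : ∀ e ∈ Er, segment ℝ (pos e.1) (pos e.2) ⊆ curveInterior (pathSet S))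
    -- the exterior contains the unreachable subgraph
    (houtV : ∀ v : V, ¬ reach v → pos v ∈ curveExterior (pathSet S))
    (houtE : ∀ e ∈ E, ¬ reach e.1 → ¬ reach e.2 →
      segment ℝ (pos e.1) (pos e.2) ⊆ curveExterior (pathSet S))
    -- crossings are transversal: near each crossing point the edge has points on both sides
    (htrans : ∀ e ∈ E, ∀ p ∈ pathSet S ∩ openSegment ℝ (pos e.1) (pos e.2), ∀ ε > (0:ℝ),
      (∃ q ∈ openSegment ℝ (pos e.1) (pos e.2) ∩ Metric.ball p ε,
        q ∈ curveInterior (pathSet S)) ∧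
      (∃ q ∈ openSegment ℝ (pos e.1) (pos e.2) ∩ Metric.ball p ε,
        q ∈ curveExterior (pathSet S)))
    -- finitely many crossings on each edge
    (hfin : ∀ e ∈ E, (pathSet S ∩ openSegment ℝ (pos e.1) (pos e.2)).Finite) :
    (∀ e ∈ E, (reach e.1 ↔ ¬ reach e.2) →
      Odd (pathSet S ∩ openSegment ℝ (pos e.1) (pos e.2)).ncard) ∧
    (∀ e ∈ E, reach e.1 → reach e.2 → e ∉ Er →
      Even (pathSet S ∩ openSegment ℝ (pos e.1) (pos e.2)).ncard) :=
  stmt_6_general pos E reach Er S havoid hinV houtV htrans hfin
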